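/- For the urn-model N-step distribution ν_N, the expectation of Q(x̄) = (1/n)∑_j ω_1(x_j) is E_{ν_N}(Q) = [1 − (mp/n)(1 − ω_1(x_0))]^N, which is nonnegative when ω_1(x_0) is real, M < 1, and 0 < mp ≤ 1/2. -/

import Mathlib

open scoped BigOperators

attribute [local instance] Classical.propDecidable

noncomputable def avgIdem (K : Type) [Group K] [Fintype K] (L : Subgroup K) :
    MonoidAlgebra ℂ K :=
  (Fintype.card L : ℂ)⁻¹ • ∑ h : L, MonoidAlgebra.of ℂ K (h : K)

/-- `(K, L)` is a Gelfand pair: the Hecke algebra `e_L ℂK e_L` is commutative. -/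
def IsGelfandPair (K : Type) [Group K] [Fintype K] (L : Subgroup K) : Prop :=
  ∀ x y : MonoidAlgebra ℂ K,
    (avgIdem K L * x * avgIdem K L) * (avgIdem K L * y * avgIdem K L) =
      (avgIdem K L * y * avgIdem K L) * (avgIdem K L * x * avgIdem K L)

/-- `ω` is a zonal spherical function of the pair `(K, L)`:
normalized, bi-`L`-invariant, and satisfying the spherical functional equation. -/
def IsZSF (K : Type) [Group K] [Fintype K] (L : Subgroup K) (ω : K → ℂ) : Prop :=
  ω 1 = 1 ∧
    (∀ g : K, ∀ h ∈ L, ∀ h' ∈ L, ω (h * g * h') = ω g) ∧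
    ∀ x y : K, (Fintype.card L : ℂ)⁻¹ * ∑ h : L, ω (x * (h : K) * y) = ω x * ω y

/-- the double coset `L x₀ L` as a set -/
def dcoset (K : Type) [Group K] (L : Subgroup K) (x₀ : K) : Set K :=
  {g : K | ∃ a ∈ L, ∃ b ∈ L, g = a * x₀ * b}

/-- one-step transition probability of the interacting urn model on `(K ⧸ L)^n` -/
noncomputable def step (K : Type) [Group K] [Fintype K] (L : Subgroup K) (x₀ : K)
    (n m : ℕ) (p : ℝ) (x y : Fin n → K ⧸ L) : ℝ :=
  if x = y then 1 - m * p
  else if ∃ j : Fin n, (∀ i : Fin n, i ≠ j → x i = y i) ∧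
      (x j).out⁻¹ * (y j).out ∈ dcoset K L x₀ then p / n
  else 0

/-- the transition matrix `P_{(K,L;n)}` (real version) -/
noncomputable def PmatR (K : Type) [Group K] [Fintype K] (L : Subgroup K) (x₀ : K)
    (n m : ℕ) (p : ℝ) : Matrix (Fin n → K ⧸ L) (Fin n → K ⧸ L) ℝ :=
  Matrix.of fun x y => step K L x₀ n m p x y

/-- the transition matrix `P_{(K,L;n)}` (complex version) -/
noncomputable def PmatC (K : Type) [Group K] [Fintype K] (L : Subgroup K) (x₀ : K)
    (n m : ℕ) (p : ℝ) : Matrix (Fin n → K ⧸ L) (Fin n → K ⧸ L) ℂ :=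
  Matrix.of fun x y => (step K L x₀ n m p x y : ℂ)

/-- the initial state `ē = (L, …, L)` -/
def eQ (K : Type) [Group K] (L : Subgroup K) (n : ℕ) : Fin n → K ⧸ L :=
  fun _ => ((1 : K) : K ⧸ L)

/-!
The coordinate mean `Q x = n⁻¹ ∑ⱼ ω (x j)` is an eigenvector of the transition matrix with
eigenvalue `λ = 1 - (m p / n) (1 - ω x₀)`: a move replaces one coordinate `a L` by a uniformly
chosen coset inside `a L x₀ L`, and averaging `ω` over that double coset gives `ω a * ω x₀` by the
spherical functional equation. Hence `E_{ν_N} Q = (P^N Q)(ē) = λ^N Q(ē) = λ^N`. When `ω x₀` is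
real, `|ω| ≤ 1` and `m p ≤ 1/2` put `λ` in `[0, 1]`.
-/

open Finset Matrix

section DoubleCoset

variable {K : Type} [Group K] {L : Subgroup K} {x₀ : K}

lemma mul_right_mem_dcoset_iff {g h : K} (hh : h ∈ L) :
    g * h ∈ dcoset K L x₀ ↔ g ∈ dcoset K L x₀ := by
  constructor
  · rintro ⟨a, ha, b, hb, hab⟩
    exact ⟨a, ha, b * h⁻¹, L.mul_mem hb (L.inv_mem hh), by
      rw [← mul_inv_cancel_right g h, hab]; group⟩
  · rintro ⟨a, ha, b, hb, rfl⟩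
    exact ⟨a, ha, b * h, L.mul_mem hb hh, by group⟩

lemma mul_left_mem_dcoset_iff {g h : K} (hh : h ∈ L) :
    h * g ∈ dcoset K L x₀ ↔ g ∈ dcoset K L x₀ := by
  constructor
  · rintro ⟨a, ha, b, hb, hab⟩
    exact ⟨h⁻¹ * a, L.mul_mem (L.inv_mem hh) ha, b, hb, by
      rw [← inv_mul_cancel_left h g, hab]; group⟩
  · rintro ⟨a, ha, b, hb, rfl⟩
    exact ⟨h * a, L.mul_mem hh ha, b, hb, by group⟩

lemma one_notMem_dcoset (hx₀ : x₀ ∉ L) : (1 : K) ∉ dcoset K L x₀ := by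
  rintro ⟨a, ha, b, hb, hab⟩
  have : x₀ = a⁻¹ * b⁻¹ :=
    calc x₀ = a⁻¹ * (a * x₀ * b) * b⁻¹ := by group
      _ = a⁻¹ * b⁻¹ := by rw [← hab]; group
  exact hx₀ (this ▸ L.mul_mem (L.inv_mem ha) (L.inv_mem hb))

end DoubleCoset

lemma sum_eq_card_nsmul_sum_out {K M : Type*} [Group K] [Fintype K] [AddCommMonoid M]
    (L : Subgroup K) {f : K → M} (hf : ∀ g, ∀ h ∈ L, f (g * h) = f g) :
    ∑ g, f g = Fintype.card L • ∑ d : K ⧸ L, f d.out := by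
  have hbij : Function.Bijective fun q : (K ⧸ L) × L => q.1.out * q.2 := by
    refine ⟨fun ⟨d, h⟩ ⟨d', h'⟩ he => ?_, fun g => ⟨((g : K ⧸ L), ⟨(g : K ⧸ L).out⁻¹ * g, ?_⟩),
      mul_inv_cancel_left _ g⟩⟩
    · have hd : d = d' := by
        simpa [QuotientGroup.mk_mul_of_mem _ h.2, QuotientGroup.mk_mul_of_mem _ h'.2] using
          congrArg (QuotientGroup.mk (s := L)) he
      subst hd
      simpa using he
    · exact QuotientGroup.leftRel_apply.mp (Quotient.exact' (QuotientGroup.out_eq' _))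
  rw [← Fintype.sum_bijective _ hbij (fun q => f (q.1.out * q.2)) f fun _ => rfl,
    Fintype.sum_prod_type, Finset.smul_sum]
  simp [hf _ _ (Subtype.prop _)]

namespace IsZSF

variable {K : Type} [Group K] [Fintype K] {L : Subgroup K} {ω : K → ℂ}

lemma apply_mul_of_mem (hω : IsZSF K L ω) (g : K) {h : K} (hh : h ∈ L) : ω (g * h) = ω g := by
  simpa using hω.2.1 g 1 L.one_mem h hh

lemma apply_out_mk (hω : IsZSF K L ω) (g : K) : ω (g : K ⧸ L).out = ω g := by
  obtain ⟨h, hh⟩ := QuotientGroup.mk_out_eq_mul L g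
  rw [hh, hω.apply_mul_of_mem g h.2]

lemma apply_eq_of_mem_dcoset (hω : IsZSF K L ω) {x₀ g : K} (hg : g ∈ dcoset K L x₀) :
    ω g = ω x₀ := by
  obtain ⟨a, ha, b, hb, rfl⟩ := hg
  exact hω.2.1 x₀ a ha b hb

lemma norm_le_one (hω : IsZSF K L ω) (g : K) : ‖ω g‖ ≤ 1 := by
  obtain ⟨b, -, hb⟩ := Finset.exists_max_image univ (fun g => ‖ω g‖) ⟨1, mem_univ 1⟩
  have hL : (0 : ℝ) < Fintype.card L := by exact_mod_cast Fintype.card_pos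
  -- `ω b ^ 2` is an average of values of `ω`, so `‖ω b‖ ^ 2 ≤ ‖ω b‖`
  have hsq : ‖ω b‖ * ‖ω b‖ ≤ ‖ω b‖ := by
    rw [← norm_mul, ← hω.2.2 b b, norm_mul, norm_inv, Complex.norm_natCast,
      inv_mul_le_iff₀ hL]
    calc ‖∑ h : L, ω (b * h * b)‖ ≤ ∑ _h : L, ‖ω b‖ :=
          norm_sum_le_of_le _ fun h _ => hb _ (mem_univ _)
      _ = Fintype.card L * ‖ω b‖ := by simp
  have h1 : 1 ≤ ‖ω b‖ := by simpa [hω.1] using hb 1 (mem_univ 1)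
  exact (hb g (mem_univ g)).trans (by nlinarith)

lemma const_one : IsZSF K L fun _ => 1 := by
  refine ⟨rfl, fun _ _ _ _ _ => rfl, fun _ _ => ?_⟩
  simp [Fintype.card_ne_zero]

lemma sum_dcoset_mul (hω : IsZSF K L ω) (x₀ a : K) :
    ∑ g ∈ (dcoset K L x₀).toFinset, ω (a * g) =
      #(dcoset K L x₀).toFinset * (ω a * ω x₀) := by
  set D := (dcoset K L x₀).toFinset
  have hL : (Fintype.card L : ℂ) ≠ 0 := Nat.cast_ne_zero.2 Fintype.card_ne_zero
  have htrans (h : L) : ∑ g ∈ D, ω (a * (h * g)) = ∑ g ∈ D, ω (a * g) :=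
    Finset.sum_nbij' (h * ·) (h⁻¹ * ·)
      (fun g hg => by simpa [D, mul_left_mem_dcoset_iff h.2] using hg)
      (fun g hg => by simpa [D, mul_left_mem_dcoset_iff (L.inv_mem h.2)] using hg)
      (fun g _ => by simp) (fun g _ => by simp) (fun _ _ => rfl)
  -- `ω a * ω g` is the average of `ω (a h g)` over `h ∈ L`, and `L x₀ L` is stable under `L • ·`
  calc ∑ g ∈ D, ω (a * g)
      = (Fintype.card L : ℂ)⁻¹ * ∑ h : L, ∑ g ∈ D, ω (a * (h * g)) := by
        simp [htrans, hL]
    _ = ∑ g ∈ D, (Fintype.card L : ℂ)⁻¹ * ∑ h : L, ω (a * h * g) := by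
        rw [Finset.sum_comm, Finset.mul_sum]; simp only [mul_assoc]
    _ = ∑ _g ∈ D, ω a * ω x₀ := Finset.sum_congr rfl fun g hg => by
        rw [hω.2.2, hω.apply_eq_of_mem_dcoset (Set.mem_toFinset.1 hg)]
    _ = #D * (ω a * ω x₀) := by simp

lemma sum_out_dcoset (hω : IsZSF K L ω) {x₀ : K} {m : ℕ}
    (hm : m * Nat.card L = Nat.card (dcoset K L x₀)) (a : K) :
    ∑ d : K ⧸ L with a⁻¹ * d.out ∈ dcoset K L x₀, ω d.out = m * (ω a * ω x₀) := by
  have hL : (Fintype.card L : ℂ) ≠ 0 := Nat.cast_ne_zero.2 Fintype.card_ne_zero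
  have hinv (g : K) {h : K} (hh : h ∈ L) :
      (if a⁻¹ * (g * h) ∈ dcoset K L x₀ then ω (g * h) else 0) =
        if a⁻¹ * g ∈ dcoset K L x₀ then ω g else 0 := by
    rw [← mul_assoc, mul_right_mem_dcoset_iff hh, hω.apply_mul_of_mem g hh]
  have hsum := sum_eq_card_nsmul_sum_out L
    (f := fun g => if a⁻¹ * g ∈ dcoset K L x₀ then ω g else 0) (fun g h hh => hinv g hh)
  rw [Fintype.sum_equiv (Equiv.mulLeft a⁻¹) _ (fun g => if g ∈ dcoset K L x₀ then ω (a * g) else 0)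
      (fun g => by simp), ← Finset.sum_filter, ← Finset.sum_filter, nsmul_eq_mul] at hsum
  rw [← mul_right_inj' hL, ← hsum]
  have hcard : (#(dcoset K L x₀).toFinset : ℂ) = m * Fintype.card L := by
    rw [← Nat.card_eq_card_toFinset, ← hm, Nat.card_eq_fintype_card]; push_cast; rfl
  rw [Set.filter_mem_univ_eq_toFinset, sum_dcoset_mul hω, hcard]
  ring

end IsZSF

lemma card_out_mem_dcoset {K : Type} [Group K] [Fintype K] {L : Subgroup K} {x₀ : K} {m : ℕ}
    (hm : m * Nat.card L = Nat.card (dcoset K L x₀)) (a : K) :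
    #{d : K ⧸ L | a⁻¹ * d.out ∈ dcoset K L x₀} = m := by
  exact_mod_cast by simpa using IsZSF.const_one.sum_out_dcoset hm a

lemma sum_filter_exists_update {α M : Type*} [Fintype α] [AddCommMonoid M] {n : ℕ}
    (R : α → α → Prop) (hR : ∀ a, ¬ R a a) (x : Fin n → α) (F : (Fin n → α) → M) :
    ∑ y with ∃ j, (∀ i, i ≠ j → x i = y i) ∧ R (x j) (y j), F y =
      ∑ j, ∑ d with R (x j) d, F (Function.update x j d) := by
  rw [Finset.sum_sigma']
  refine (Finset.sum_bij (fun q _ => Function.update x q.1 q.2) ?_ ?_ ?_ fun _ _ => rfl).symm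
  · rintro ⟨j, d⟩ hq
    simp only [Finset.mem_sigma, Finset.mem_filter_univ, Finset.mem_univ, true_and] at hq ⊢
    exact ⟨j, fun i hi => (Function.update_of_ne hi d x).symm, by simpa using hq⟩
  · rintro ⟨j, d⟩ hq ⟨j', d'⟩ hq' he
    simp only [Finset.mem_sigma, Finset.mem_filter_univ, Finset.mem_univ, true_and] at hq hq'
    have hj := congrFun he j
    obtain rfl : j = j' := by
      by_contra hjj
      rw [Function.update_self, Function.update_of_ne hjj] at hj
      exact hR _ (hj ▸ hq)
    simp_all
  · rintro y hy
    simp only [Finset.mem_filter_univ] at hy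
    obtain ⟨j, hxy, hj⟩ := hy
    refine ⟨⟨j, y j⟩, by simpa using hj, funext fun i => ?_⟩
    rcases eq_or_ne i j with rfl | hi
    · simp
    · simp [Function.update_of_ne hi, hxy i hi]

lemma Matrix.pow_mulVec_of_mulVec_eq_smul {ι R : Type*} [Fintype ι] [DecidableEq ι]
    [CommSemiring R] {A : Matrix ι ι R} {v : ι → R} {c : R} (h : A *ᵥ v = c • v) (N : ℕ) :
    A ^ N *ᵥ v = c ^ N • v := by
  induction N with
  | zero => simp
  | succ N ih => rw [pow_succ, ← mulVec_mulVec, h, mulVec_smul, ih, smul_smul, ← pow_succ']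

section Urn

variable {K : Type} [Group K] {L : Subgroup K} {n : ℕ}

noncomputable def coordMean (ω : K → ℂ) (x : Fin n → K ⧸ L) : ℂ :=
  (n : ℂ)⁻¹ * ∑ j, ω (x j).out

lemma coordMean_update (ω : K → ℂ) (x : Fin n → K ⧸ L) (j : Fin n) (d : K ⧸ L) :
    coordMean ω (Function.update x j d) = coordMean ω x + (n : ℂ)⁻¹ * (ω d.out - ω (x j).out) := by
  have hupd : ∀ i, ω (Function.update x j d i).out =
      Function.update (fun i => ω (x i).out) j (ω d.out) i :=
    Function.apply_update (fun _ c => ω c.out) x j d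
  simp only [coordMean, hupd, Finset.sum_update_of_mem (Finset.mem_univ j),
    Finset.sum_eq_add_sum_sdiff_singleton_of_mem (Finset.mem_univ j) (fun i => ω (x i).out)]
  ring

lemma step_eq_ite_add_ite [Fintype K] {x₀ : K} (hx₀ : x₀ ∉ L) (m : ℕ) (p : ℝ)
    (x y : Fin n → K ⧸ L) :
    step K L x₀ n m p x y = (if x = y then 1 - m * p else 0) +
      if ∃ j, (∀ i, i ≠ j → x i = y i) ∧ (x j).out⁻¹ * (y j).out ∈ dcoset K L x₀
      then p / n else 0 := by
  rcases eq_or_ne x y with rfl | hxy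
  · simp [step, one_notMem_dcoset hx₀]
  · simp [step, hxy]

lemma sum_step_mul [Fintype K] {x₀ : K} (hx₀ : x₀ ∉ L) (m : ℕ) (p : ℝ) (x : Fin n → K ⧸ L)
    (v : (Fin n → K ⧸ L) → ℂ) :
    ∑ y, (step K L x₀ n m p x y : ℂ) * v y = (1 - m * p) * v x +
      p / n * ∑ j, ∑ d : K ⧸ L with (x j).out⁻¹ * d.out ∈ dcoset K L x₀,
        v (Function.update x j d) := by
  rw [← sum_filter_exists_update (fun a b : K ⧸ L => a.out⁻¹ * b.out ∈ dcoset K L x₀)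
    (fun a => by simpa using one_notMem_dcoset hx₀), Finset.mul_sum, Finset.sum_filter]
  simp only [step_eq_ite_add_ite hx₀, Complex.ofReal_add, add_mul, Finset.sum_add_distrib]
  congr 1
  · rw [Fintype.sum_eq_single x fun y hy => by simp [Ne.symm hy]]
    simp
  · exact Finset.sum_congr rfl fun y _ => by split_ifs <;> simp

lemma PmatC_mulVec_coordMean [Fintype K] {ω : K → ℂ} (hω : IsZSF K L ω) {x₀ : K} (hx₀ : x₀ ∉ L)
    {m : ℕ} (hm : m * Nat.card L = Nat.card (dcoset K L x₀)) (p : ℝ) (hn : n ≠ 0) :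
    PmatC K L x₀ n m p *ᵥ coordMean ω = (1 - (m * p / n : ℂ) * (1 - ω x₀)) • coordMean ω := by
  ext x
  have hcoord (j : Fin n) :
      ∑ d : K ⧸ L with (x j).out⁻¹ * d.out ∈ dcoset K L x₀, coordMean ω (Function.update x j d) =
        m * coordMean ω x + m * (ω x₀ - 1) * ((n : ℂ)⁻¹ * ω (x j).out) := by
    simp only [coordMean_update, Finset.sum_add_distrib, ← Finset.mul_sum, Finset.sum_sub_distrib,
      Finset.sum_const, card_out_mem_dcoset hm, hω.sum_out_dcoset hm, nsmul_eq_mul]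
    ring
  have hsum : ∑ j, (n : ℂ)⁻¹ * ω (x j).out = coordMean ω x := (Finset.mul_sum ..).symm
  simp only [mulVec, dotProduct, PmatC, Matrix.of_apply, sum_step_mul hx₀, hcoord,
    Finset.sum_add_distrib, ← Finset.mul_sum, hsum, Finset.sum_const, Finset.card_univ,
    Fintype.card_fin, nsmul_eq_mul, Pi.smul_apply, smul_eq_mul]
  field_simp
  ring

lemma coordMean_eQ [Fintype K] {ω : K → ℂ} (hω : IsZSF K L ω) (hn : n ≠ 0) :
    coordMean ω (eQ K L n) = 1 := by
  simp [coordMean, eQ, hω.apply_out_mk, hω.1, hn]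

end Urn

theorem mean_of_Q_nstep_general
    (K : Type) [Group K] [Fintype K] (L : Subgroup K)
    (s : ℕ) (hs : 2 ≤ s)
    (ω : Fin s → K → ℂ)
    (hzsf : ∀ i, IsZSF K L (ω i))
    (x₀ : K) (hx₀ : x₀ ∉ L)
    (m : ℕ) (hm : m * Nat.card L = Nat.card (dcoset K L x₀))
    (hreal : ∀ i, (ω i x₀).im = 0)
    (p : ℝ) (hp0 : 0 < m * p) (hp2 : m * p ≤ 1 / 2)
    (n : ℕ) (hn : 0 < n) (N : ℕ) :
    ∑ x : Fin n → K ⧸ L,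
        (PmatC K L x₀ n m p ^ N) (eQ K L n) x *
          ((n : ℂ)⁻¹ * ∑ j : Fin n, ω ⟨1, hs⟩ (x j).out) =
      (1 - ((m : ℂ) * p / n) * (1 - ω ⟨1, hs⟩ x₀)) ^ N ∧
      0 ≤ ((1 - ((m : ℂ) * p / n) * (1 - ω ⟨1, hs⟩ x₀)) ^ N).re := by
  have hω := hzsf ⟨1, hs⟩
  constructor
  · have h := congrFun (Matrix.pow_mulVec_of_mulVec_eq_smul
      (PmatC_mulVec_coordMean hω hx₀ hm p hn.ne') N) (eQ K L n)
    rwa [Pi.smul_apply, coordMean_eQ hω hn.ne', smul_eq_mul, mul_one] at h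
  · set r := (ω ⟨1, hs⟩ x₀).re
    have hr : ω ⟨1, hs⟩ x₀ = r := Complex.ext rfl (hreal _)
    have hr1 : |r| ≤ 1 := by simpa [hr] using hω.norm_le_one x₀
    have hmpn : m * p / n ≤ m * p := div_le_self hp0.le (by exact_mod_cast hn)
    have hbase : 0 ≤ 1 - m * p / n * (1 - r) := by
      nlinarith [abs_le.1 hr1, div_nonneg hp0.le (Nat.cast_nonneg n : (0 : ℝ) ≤ n)]
    have hreal_base : 1 - ((m : ℂ) * p / n) * (1 - r) = ((1 - m * p / n * (1 - r) : ℝ) : ℂ) := by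
      push_cast; ring
    rw [hr, hreal_base, ← Complex.ofReal_pow, Complex.ofReal_re]
    exact pow_nonneg hbase N

/-- Expectation of `Q` under the `N`-step distribution:
`E_{ν_N}(Q) = (1 - (mp/n)(1 - ω₁(x₀)))^N`, and this quantity is nonnegative (real) when
`ω_i(x₀) ∈ ℝ`, `M < 1` and `0 < mp ≤ 1/2`. -/
theorem mean_of_Q_nstep
    (K : Type) [Group K] [Fintype K] (L : Subgroup K)
    (hGP : IsGelfandPair K L)
    (s : ℕ) [NeZero s] (hs : 2 ≤ s)
    (ω : Fin s → K → ℂ)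
    (hzsf : ∀ i, IsZSF K L (ω i))
    (hω0 : ∀ g : K, ω 0 g = 1)
    (hinj : Function.Injective ω)
    (hcomplete : s = Nat.card (DoubleCoset.Quotient (L : Set K) (L : Set K)))
    (x₀ : K) (hx₀ : x₀ ∉ L)
    (m : ℕ) (hm : m * Nat.card L = Nat.card (dcoset K L x₀))
    (hreal : ∀ i, (ω i x₀).im = 0)
    (M : ℝ)
    (hM : IsGreatest (Set.range fun i : {i : Fin s // i ≠ 0} => (ω (i : Fin s) x₀).re) M)
    (hM1 : M < 1)
    (p : ℝ) (hp0 : 0 < m * p) (hp2 : m * p ≤ 1 / 2)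
    (n : ℕ) (hn : 0 < n) (N : ℕ) :
    ∑ x : Fin n → K ⧸ L,
        (PmatC K L x₀ n m p ^ N) (eQ K L n) x *
          ((n : ℂ)⁻¹ * ∑ j : Fin n, ω ⟨1, hs⟩ (x j).out) =
      (1 - ((m : ℂ) * p / n) * (1 - ω ⟨1, hs⟩ x₀)) ^ N ∧
      0 ≤ ((1 - ((m : ℂ) * p / n) * (1 - ω ⟨1, hs⟩ x₀)) ^ N).re :=
  mean_of_Q_nstep_general K L s hs ω hzsf x₀ hx₀ m hm hreal p hp0 hp2 n hn N
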